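/- In a simplex-wise graph filtration, if two consecutive edge additions e1 (at step i-1) and e2 (at step i) are both positive, then after switching them both edges remain positive and the persistence pairing is unchanged. -/
import Mathlib


open SimpleGraph Finset

structure FGraph (V : Type) where
  verts : Finset V
  edges : Finset (Sym2 V)

inductive Step (V : Type) where
  | vertex (v : V)
  | edge (e : Sym2 V)
deriving DecidableEq

variable {V : Type} [DecidableEq V] {m : ℕ}

def FGraph.sg (G : FGraph V) : SimpleGraph V :=
  SimpleGraph.fromEdgeSet (G.edges : Set (Sym2 V))

/-- `x` and `y` lie in the same connected component of `G`. -/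
def FGraph.ConnectedIn (G : FGraph V) (x y : V) : Prop :=
  x ∈ G.verts ∧ y ∈ G.verts ∧ G.sg.Reachable x y

/-- The number of connected components of `G`. -/
noncomputable def FGraph.numComponents (G : FGraph V) : ℕ :=
  Nat.card (Quot fun x y : {v // v ∈ G.verts} => G.sg.Adj x.1 y.1)

/-- First Betti number as an integer: `|E| + #components - |V|`. -/
noncomputable def FGraph.betti1 (G : FGraph V) : ℤ :=
  (G.edges.card : ℤ) + (G.numComponents : ℤ) - (G.verts.card : ℤ)

/-- The edge `e` lies on some cycle of `G`. -/
def FGraph.OnCycle (G : FGraph V) (e : Sym2 V) : Prop :=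
  ∃ (x : V) (c : G.sg.Walk x x), c.IsCycle ∧ e ∈ c.edges

def FGraph.addStep (G : FGraph V) : Step V → FGraph V
  | .vertex v => ⟨insert v G.verts, G.edges⟩
  | .edge e => ⟨G.verts, insert e G.edges⟩

def StepValid (G : FGraph V) : Step V → Prop
  | .vertex v => v ∉ G.verts
  | .edge e => e ∉ G.edges ∧ ¬ e.IsDiag ∧ ∀ v ∈ e, v ∈ G.verts

/-- A simplex-wise standard graph filtration of length `m`. -/
structure Filtration (V : Type) (m : ℕ) where
  steps : Fin m → Step V

namespace Filtration

def graphAt (F : Filtration V m) : ℕ → FGraph V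
  | 0 => ⟨∅, ∅⟩
  | i + 1 => if h : i < m then (F.graphAt i).addStep (F.steps ⟨i, h⟩) else F.graphAt i

def Valid (F : Filtration V m) : Prop :=
  ∀ i : Fin m, StepValid (F.graphAt (i : ℕ)) (F.steps i)

/-- The addition index of vertex `x`. -/
noncomputable def vidx (F : Filtration V m) (x : V) : ℕ :=
  sInf {n : ℕ | ∃ i : Fin m, (i : ℕ) = n ∧ F.steps i = Step.vertex x}

/-- The addition index of edge `e`. -/
noncomputable def eidx (F : Filtration V m) (e : Sym2 V) : ℕ :=
  sInf {n : ℕ | ∃ i : Fin m, (i : ℕ) = n ∧ F.steps i = Step.edge e}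

/-- Step `i` adds a negative edge: one merging two connected components. -/
def NegativeAt (F : Filtration V m) (i : Fin m) : Prop :=
  ∃ e, F.steps i = Step.edge e ∧
    (F.graphAt ((i : ℕ) + 1)).numComponents < (F.graphAt (i : ℕ)).numComponents

/-- Step `i` adds a positive edge: one not changing the number of components. -/
def PositiveAt (F : Filtration V m) (i : Fin m) : Prop :=
  ∃ e, F.steps i = Step.edge e ∧
    (F.graphAt ((i : ℕ) + 1)).numComponents = (F.graphAt (i : ℕ)).numComponents

/-- `x` is the oldest vertex of its connected component in `G_i`. -/
def OldestIn (F : Filtration V m) (i : ℕ) (x : V) : Prop :=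
  x ∈ (F.graphAt i).verts ∧
    ∀ y, (F.graphAt i).ConnectedIn x y → F.vidx x ≤ F.vidx y

/-- `x` is the vertex paired with the negative edge added at step `j`:
`x` is the younger of the two oldest vertices of the merged components. -/
def PairedAt (F : Filtration V m) (j : Fin m) (x : V) : Prop :=
  ∃ u v, F.steps j = Step.edge s(u, v) ∧
    ¬ (F.graphAt (j : ℕ)).ConnectedIn u v ∧
    (F.graphAt (j : ℕ)).ConnectedIn x u ∧ F.OldestIn (j : ℕ) x ∧
    ∃ y, (F.graphAt (j : ℕ)).ConnectedIn y v ∧ F.OldestIn (j : ℕ) y ∧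
      F.vidx y < F.vidx x

/-- `x` is unpaired at stage `i`: not paired with any negative edge added before `i`. -/
def UnpairedAt (F : Filtration V m) (i : ℕ) (x : V) : Prop :=
  ∀ j : Fin m, (j : ℕ) < i → ¬ F.PairedAt j x

/-- Step `i` contributes a node of the merge forest (a vertex leaf or a
negative edge internal node). -/
def IsNode (F : Filtration V m) (i : Fin m) : Prop :=
  (∃ v, F.steps i = Step.vertex v) ∨ F.NegativeAt i

/-- `x` is a representative vertex of the merge-forest node at level `i`. -/
def RepOf (F : Filtration V m) (i : Fin m) (x : V) : Prop :=
  F.steps i = Step.vertex x ∨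
    ∃ u v, F.steps i = Step.edge s(u, v) ∧
      ¬ (F.graphAt (i : ℕ)).ConnectedIn u v ∧ (x = u ∨ x = v)

/-- The merge-forest node at level `j` is a child of the (negative-edge)
node at level `i`: `j`'s component at time `i` is one of the two components
merged by the edge at step `i`, and no node of level strictly between `j`
and `i` lies in that component. -/
def MFChild (F : Filtration V m) (j i : Fin m) : Prop :=
  (j : ℕ) < (i : ℕ) ∧ F.IsNode j ∧
  ∃ u v, F.steps i = Step.edge s(u, v) ∧
    ¬ (F.graphAt (i : ℕ)).ConnectedIn u v ∧
    ∃ x, F.RepOf j x ∧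
      ((F.graphAt (i : ℕ)).ConnectedIn x u ∨ (F.graphAt (i : ℕ)).ConnectedIn x v) ∧
      ∀ j' : Fin m, (j : ℕ) < (j' : ℕ) → (j' : ℕ) < (i : ℕ) → F.IsNode j' →
        ∀ y, F.RepOf j' y → ¬ (F.graphAt (i : ℕ)).ConnectedIn x y

end Filtration


section AuxLemmas

variable {V : Type} [DecidableEq V] {m : ℕ}

private lemma quot_eq_reach {s : Finset V} {E : Finset (Sym2 V)} {x y : {v // v ∈ s}}
    (h : Quot.mk (fun a b : {v // v ∈ s} => (FGraph.sg ⟨s, E⟩).Adj a.1 b.1) x =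
      Quot.mk (fun a b : {v // v ∈ s} => (FGraph.sg ⟨s, E⟩).Adj a.1 b.1) y) :
    (FGraph.sg ⟨s, E⟩).Reachable x.1 y.1 := by
  rw [Quot.eq] at h
  induction h with
  | rel a b hab => exact hab.reachable
  | refl a => exact SimpleGraph.Reachable.refl _
  | symm a b _ ih => exact ih.symm
  | trans a b c _ _ ih1 ih2 => exact ih1.trans ih2

private lemma nc_mono (s : Finset V) (E E' : Finset (Sym2 V)) (h : E ⊆ E') :
    FGraph.numComponents ⟨s, E'⟩ ≤ FGraph.numComponents ⟨s, E⟩ := by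
  classical
  have himp : ∀ a b : {v // v ∈ s},
      (FGraph.sg ⟨s, E⟩).Adj a.1 b.1 → (FGraph.sg ⟨s, E'⟩).Adj a.1 b.1 := by
    intro a b hab
    exact SimpleGraph.fromEdgeSet_mono (by exact_mod_cast Finset.coe_subset.2 h) hab
  refine Nat.card_le_card_of_surjective (Quot.map id himp) ?_
  intro q
  obtain ⟨a, rfl⟩ := Quot.exists_rep q
  exact ⟨Quot.mk _ a, rfl⟩

private lemma nc_strict (s : Finset V) (E : Finset (Sym2 V)) (u v : V)
    (hu : u ∈ s) (hv : v ∈ s) (hne : u ≠ v)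
    (hreach : ¬ (FGraph.sg ⟨s, E⟩).Reachable u v) :
    FGraph.numComponents ⟨s, insert s(u, v) E⟩ < FGraph.numComponents ⟨s, E⟩ := by
  classical
  have himp : ∀ a b : {v // v ∈ s},
      (FGraph.sg ⟨s, E⟩).Adj a.1 b.1 → (FGraph.sg ⟨s, insert s(u, v) E⟩).Adj a.1 b.1 := by
    intro a b hab
    exact SimpleGraph.fromEdgeSet_mono
      (by exact_mod_cast Finset.coe_subset.2 (Finset.subset_insert _ _)) hab
  set r := fun a b : {v // v ∈ s} => (FGraph.sg ⟨s, E⟩).Adj a.1 b.1 with hr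
  set r' := fun a b : {v // v ∈ s} => (FGraph.sg ⟨s, insert s(u, v) E⟩).Adj a.1 b.1 with hr'
  have hsurj : Function.Surjective (Quot.map (fun a => a) himp : Quot r → Quot r') := by
    intro q
    obtain ⟨a, rfl⟩ := Quot.exists_rep q
    exact ⟨Quot.mk _ a, rfl⟩
  have hninj : ¬ Function.Injective (Quot.map (fun a => a) himp : Quot r → Quot r') := by
    intro hinj
    have hadj : r' ⟨u, hu⟩ ⟨v, hv⟩ := by
      rw [hr']
      refine (SimpleGraph.fromEdgeSet_adj _).2 ⟨?_, hne⟩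
      simp
    have : Quot.mk r ⟨u, hu⟩ = Quot.mk r ⟨v, hv⟩ := hinj (Quot.sound hadj)
    exact hreach (quot_eq_reach this)
  have hfin1 : Fintype (Quot r) := Fintype.ofFinite _
  have hfin2 : Fintype (Quot r') := Fintype.ofFinite _
  have := Fintype.card_lt_of_surjective_not_injective _ hsurj hninj
  unfold FGraph.numComponents
  rw [Nat.card_eq_fintype_card, Nat.card_eq_fintype_card]
  convert this using 2 <;> exact Subsingleton.elim _ _

private lemma positive_reachable (G : FGraph V) (u v : V)
    (hu : u ∈ G.verts) (hv : v ∈ G.verts) (hne : u ≠ v)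
    (hnc : FGraph.numComponents ⟨G.verts, insert s(u, v) G.edges⟩ = G.numComponents) :
    G.sg.Reachable u v := by
  by_contra h
  exact absurd hnc (Nat.ne_of_lt (nc_strict G.verts G.edges u v hu hv hne h))

private lemma reach_of_insert {E : Set (Sym2 V)} {a b : V}
    (hab : (SimpleGraph.fromEdgeSet E).Reachable a b) :
    ∀ {x y : V}, (SimpleGraph.fromEdgeSet (insert s(a, b) E)).Walk x y →
      (SimpleGraph.fromEdgeSet E).Reachable x y := by
  intro x y w
  induction w with
  | nil => exact SimpleGraph.Reachable.refl _
  | @cons p q r hpq _ ih =>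
    refine SimpleGraph.Reachable.trans ?_ ih
    rw [SimpleGraph.fromEdgeSet_adj _] at hpq
    obtain ⟨hmem, hne⟩ := hpq
    rcases Set.mem_insert_iff.1 hmem with heq | hmem'
    · rcases Sym2.eq_iff.1 heq with ⟨h1, h2⟩ | ⟨h1, h2⟩
      · rw [h1, h2]; exact hab
      · rw [h1, h2]; exact hab.symm
    · exact ((SimpleGraph.fromEdgeSet_adj _).2 ⟨hmem', hne⟩).reachable

private lemma sym2_exists {α : Type*} (e : Sym2 α) : ∃ a b, e = s(a, b) := by
  induction e using Sym2.ind with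
  | _ a b => exact ⟨a, b, rfl⟩

private lemma steps_eq_swap (F F' : Filtration V m) (i1 i2 : Fin m)
    (e1 e2 : Sym2 V)
    (hswap : ∀ k : Fin m, F'.steps k =
      if k = i1 then Step.edge e2 else if k = i2 then Step.edge e1 else F.steps k)
    (k : Fin m) (hk1 : k ≠ i1) (hk2 : k ≠ i2) : F'.steps k = F.steps k := by
  rw [hswap, if_neg hk1, if_neg hk2]

private lemma graphAt_succ_edge (F : Filtration V m) (k : ℕ) (h : k < m) (e : Sym2 V)
    (he : F.steps ⟨k, h⟩ = Step.edge e) :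
    F.graphAt (k + 1) = ⟨(F.graphAt k).verts, insert e (F.graphAt k).edges⟩ := by
  show (if h' : k < m then (F.graphAt k).addStep (F.steps ⟨k, h'⟩) else F.graphAt k) = _
  rw [dif_pos h, he]
  rfl

private lemma graphAt_swap (F F' : Filtration V m) (i1 i2 : Fin m)
    (h12 : (i2 : ℕ) = (i1 : ℕ) + 1) (e1 e2 : Sym2 V)
    (h1 : F.steps i1 = Step.edge e1) (h2 : F.steps i2 = Step.edge e2)
    (hswap : ∀ k : Fin m, F'.steps k =
      if k = i1 then Step.edge e2 else if k = i2 then Step.edge e1 else F.steps k) :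
    ∀ k : ℕ,
      (k = (i1 : ℕ) + 1 →
        F'.graphAt k = ⟨(F.graphAt (i1 : ℕ)).verts, insert e2 (F.graphAt (i1 : ℕ)).edges⟩) ∧
      (k ≠ (i1 : ℕ) + 1 → F'.graphAt k = F.graphAt k) := by
  have hne12 : i1 ≠ i2 := by
    intro h; rw [h] at h12; omega
  intro k
  induction k with
  | zero => exact ⟨fun h => by omega, fun _ => rfl⟩
  | succ k ih =>
    constructor
    · intro hk
      have hkn : k = (i1 : ℕ) := by omega
      subst hkn
      have hm : (i1 : ℕ) < m := i1.isLt
      have hfin : (⟨(i1 : ℕ), hm⟩ : Fin m) = i1 := Fin.ext rfl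
      have hst : F'.steps ⟨(i1 : ℕ), hm⟩ = Step.edge e2 := by rw [hswap, if_pos hfin]
      rw [graphAt_succ_edge F' (i1 : ℕ) hm e2 hst, (ih.2 (by omega))]
    · intro hk
      by_cases hk2 : k = (i1 : ℕ) + 1
      · subst hk2
        have hm2 : (i1 : ℕ) + 1 < m := by rw [← h12]; exact i2.isLt
        have hm1 : (i1 : ℕ) < m := i1.isLt
        have hfin2 : (⟨(i1 : ℕ) + 1, hm2⟩ : Fin m) = i2 := Fin.ext (show (i1 : ℕ) + 1 = (i2 : ℕ) by omega)
        have hfin1 : (⟨(i1 : ℕ), hm1⟩ : Fin m) = i1 := Fin.ext rfl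
        have hst' : F'.steps ⟨(i1 : ℕ) + 1, hm2⟩ = Step.edge e1 := by
          rw [hswap, if_neg, if_pos hfin2]
          rw [hfin2]; exact hne12.symm
        have hstF : F.steps ⟨(i1 : ℕ) + 1, hm2⟩ = Step.edge e2 := by rw [hfin2]; exact h2
        have hstF1 : F.steps ⟨(i1 : ℕ), hm1⟩ = Step.edge e1 := by rw [hfin1]; exact h1
        rw [graphAt_succ_edge F' _ hm2 e1 hst', graphAt_succ_edge F _ hm2 e2 hstF,
          graphAt_succ_edge F _ hm1 e1 hstF1, ih.1 rfl]
        simp [Finset.insert_comm]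
      · have hkn : k ≠ (i1 : ℕ) := by omega
        have hg := ih.2 hk2
        by_cases hm : k < m
        · have hfin1 : (⟨k, hm⟩ : Fin m) ≠ i1 := by
            intro h; apply hkn; rw [← h]
          have hfin2 : (⟨k, hm⟩ : Fin m) ≠ i2 := by
            intro h
            have : k = (i2 : ℕ) := by rw [← h]
            omega
          have hst : F'.steps ⟨k, hm⟩ = F.steps ⟨k, hm⟩ :=
            steps_eq_swap F F' i1 i2 e1 e2 hswap _ hfin1 hfin2
          show (if h' : k < m then (F'.graphAt k).addStep (F'.steps ⟨k, h'⟩) else F'.graphAt k)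
            = (if h' : k < m then (F.graphAt k).addStep (F.steps ⟨k, h'⟩) else F.graphAt k)
          rw [dif_pos hm, dif_pos hm, hst, hg]
        · show (if h' : k < m then (F'.graphAt k).addStep (F'.steps ⟨k, h'⟩) else F'.graphAt k)
            = (if h' : k < m then (F.graphAt k).addStep (F.steps ⟨k, h'⟩) else F.graphAt k)
          rw [dif_neg hm, dif_neg hm, hg]

private lemma vidx_swap (F F' : Filtration V m) (i1 i2 : Fin m)
    (e1 e2 : Sym2 V)
    (h1 : F.steps i1 = Step.edge e1) (h2 : F.steps i2 = Step.edge e2)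
    (hswap : ∀ k : Fin m, F'.steps k =
      if k = i1 then Step.edge e2 else if k = i2 then Step.edge e1 else F.steps k) :
    F'.vidx = F.vidx := by
  funext x
  unfold Filtration.vidx
  congr 1
  ext n
  constructor
  · rintro ⟨i, hi, hs⟩
    rw [hswap] at hs
    split_ifs at hs with ha hb
    · exact ⟨i, hi, hs⟩
  · rintro ⟨i, hi, hs⟩
    refine ⟨i, hi, ?_⟩
    rw [hswap]
    split_ifs with ha hb
    · subst ha; rw [h1] at hs; exact absurd hs (by simp)
    · subst hb; rw [h2] at hs; exact absurd hs (by simp)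
    · exact hs

end AuxLemmas

/-- switching two consecutive positive edge additions keeps both
edges positive and leaves the persistence pairing unchanged. -/
theorem stmt_6 {V : Type} [DecidableEq V] {m : ℕ} (F F' : Filtration V m)
    (hF : F.Valid) (i1 i2 : Fin m) (h12 : (i2 : ℕ) = (i1 : ℕ) + 1)
    (e1 e2 : Sym2 V) (h1 : F.steps i1 = Step.edge e1)
    (h2 : F.steps i2 = Step.edge e2)
    (hp1 : F.PositiveAt i1) (hp2 : F.PositiveAt i2)
    (hswap : ∀ k : Fin m, F'.steps k =
      if k = i1 then Step.edge e2
      else if k = i2 then Step.edge e1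
      else F.steps k) :
    F'.PositiveAt i1 ∧ F'.PositiveAt i2 ∧
    ∀ (j : Fin m) (x : V), F.PairedAt j x ↔ F'.PairedAt j x := by
  have hne21 : i2 ≠ i1 := by intro h; rw [h] at h12; omega
  have hGr := graphAt_swap F F' i1 i2 h12 e1 e2 h1 h2 hswap
  have hv : F'.vidx = F.vidx := vidx_swap F F' i1 i2 e1 e2 h1 h2 hswap
  have hm1 : (i1 : ℕ) < m := i1.isLt
  have hm2 : (i1 : ℕ) + 1 < m := by rw [← h12]; exact i2.isLt
  have hfin1 : (⟨(i1 : ℕ), hm1⟩ : Fin m) = i1 := Fin.ext rfl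
  have hfin2 : (⟨(i1 : ℕ) + 1, hm2⟩ : Fin m) = i2 :=
    Fin.ext (show (i1 : ℕ) + 1 = (i2 : ℕ) by omega)
  set G := F.graphAt (i1 : ℕ) with hG
  have hGn1 : F.graphAt ((i1 : ℕ) + 1) = ⟨G.verts, insert e1 G.edges⟩ :=
    graphAt_succ_edge F _ hm1 e1 (by rw [hfin1]; exact h1)
  have hGn2 : F.graphAt ((i1 : ℕ) + 1 + 1) = ⟨G.verts, insert e2 (insert e1 G.edges)⟩ := by
    have := graphAt_succ_edge F ((i1 : ℕ) + 1) hm2 e2 (by rw [hfin2]; exact h2)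
    rw [hGn1] at this
    exact this
  obtain ⟨ea, hea, hnc1⟩ := hp1
  rw [h1] at hea
  injection hea with hea
  subst hea
  obtain ⟨eb, heb, hnc2⟩ := hp2
  rw [h2] at heb
  injection heb with heb
  subst heb
  rw [hGn1] at hnc1
  rw [h12, hGn2, hGn1] at hnc2
  have hA : FGraph.numComponents ⟨G.verts, insert e2 (insert e1 G.edges)⟩ = G.numComponents :=
    hnc2.trans hnc1
  have hcomm : (⟨G.verts, insert e1 (insert e2 G.edges)⟩ : FGraph V)
      = ⟨G.verts, insert e2 (insert e1 G.edges)⟩ := by rw [Finset.insert_comm]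
  have hb_le : FGraph.numComponents ⟨G.verts, insert e2 G.edges⟩ ≤ G.numComponents :=
    nc_mono G.verts G.edges _ (Finset.subset_insert _ _)
  have hc_le : FGraph.numComponents ⟨G.verts, insert e1 (insert e2 G.edges)⟩
      ≤ FGraph.numComponents ⟨G.verts, insert e2 G.edges⟩ :=
    nc_mono G.verts _ _ (Finset.subset_insert _ _)
  have hc_eq : FGraph.numComponents ⟨G.verts, insert e1 (insert e2 G.edges)⟩
      = G.numComponents := by rw [hcomm]; exact hA
  have hb_eq : FGraph.numComponents ⟨G.verts, insert e2 G.edges⟩ = G.numComponents :=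
    le_antisymm hb_le (hc_eq ▸ hc_le)
  have hG'n : F'.graphAt (i1 : ℕ) = G := (hGr (i1 : ℕ)).2 (by omega)
  have hG'n1 : F'.graphAt ((i1 : ℕ) + 1) = ⟨G.verts, insert e2 G.edges⟩ :=
    (hGr _).1 rfl
  have hG'n2 : F'.graphAt ((i1 : ℕ) + 1 + 1) = F.graphAt ((i1 : ℕ) + 1 + 1) :=
    (hGr _).2 (by omega)
  -- endpoints of e1
  obtain ⟨a, b, hab⟩ := sym2_exists e1
  have hval1 := hF i1
  rw [h1] at hval1
  obtain ⟨-, hd1, hins1⟩ := hval1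
  have ha : a ∈ G.verts := hins1 a (by rw [hab]; exact Sym2.mem_mk_left a b)
  have hb : b ∈ G.verts := hins1 b (by rw [hab]; exact Sym2.mem_mk_right a b)
  have hneab : a ≠ b := by
    intro h; apply hd1; rw [hab, h]; exact Sym2.mk_isDiag_iff.2 rfl
  have hreach1 : G.sg.Reachable a b := by
    refine positive_reachable G a b ha hb hneab ?_
    rw [← hab]; exact hnc1
  -- endpoints of e2
  obtain ⟨c, d, hcd⟩ := sym2_exists e2
  have hval2 := hF i2
  rw [h2, h12, hGn1] at hval2
  obtain ⟨-, hd2, hins2⟩ := hval2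
  have hc : c ∈ G.verts := hins2 c (by rw [hcd]; exact Sym2.mem_mk_left c d)
  have hd : d ∈ G.verts := hins2 d (by rw [hcd]; exact Sym2.mem_mk_right c d)
  have hnecd : c ≠ d := by
    intro h; apply hd2; rw [hcd, h]; exact Sym2.mk_isDiag_iff.2 rfl
  have hreach2 : (FGraph.sg ⟨G.verts, insert e1 G.edges⟩).Reachable c d := by
    refine positive_reachable ⟨G.verts, insert e1 G.edges⟩ c d hc hd hnecd ?_
    rw [← hcd]; exact hnc2
  have hreach2' : G.sg.Reachable c d := by
    have hsg : FGraph.sg ⟨G.verts, insert e1 G.edges⟩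
        = SimpleGraph.fromEdgeSet (insert s(a, b) (G.edges : Set (Sym2 V))) := by
      show SimpleGraph.fromEdgeSet _ = _
      rw [hab, Finset.coe_insert]
    rw [hsg] at hreach2
    obtain ⟨w⟩ := hreach2
    exact reach_of_insert hreach1 w
  refine ⟨⟨e2, by rw [hswap, if_pos rfl], ?_⟩,
    ⟨e1, by rw [hswap, if_neg hne21, if_pos rfl], ?_⟩, ?_⟩
  · rw [hG'n1, hG'n]; exact hb_eq
  · rw [h12, hG'n2, hGn2, hG'n1]
    exact hA.trans hb_eq.symm
  · intro j x
    by_cases hj1 : j = i1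
    · subst hj1
      constructor
      · rintro ⟨u, v, hst, hncon, -, -, -⟩
        rw [h1] at hst
        injection hst with hst
        exfalso; apply hncon
        rw [← hG]
        rcases Sym2.eq_iff.1 (hab.symm.trans hst) with ⟨rfl, rfl⟩ | ⟨rfl, rfl⟩
        · exact ⟨ha, hb, hreach1⟩
        · exact ⟨hb, ha, hreach1.symm⟩
      · rintro ⟨u, v, hst, hncon, -, -, -⟩
        rw [hswap, if_pos rfl] at hst
        injection hst with hst
        exfalso; apply hncon
        rw [hG'n]
        rcases Sym2.eq_iff.1 (hcd.symm.trans hst) with ⟨rfl, rfl⟩ | ⟨rfl, rfl⟩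
        · exact ⟨hc, hd, hreach2'⟩
        · exact ⟨hd, hc, hreach2'.symm⟩
    · by_cases hj2 : j = i2
      · subst hj2
        constructor
        · rintro ⟨u, v, hst, hncon, -, -, -⟩
          rw [h2] at hst
          injection hst with hst
          exfalso; apply hncon
          rw [h12, hGn1]
          rcases Sym2.eq_iff.1 (hcd.symm.trans hst) with ⟨rfl, rfl⟩ | ⟨rfl, rfl⟩
          · exact ⟨hc, hd, hreach2⟩
          · exact ⟨hd, hc, hreach2.symm⟩
        · rintro ⟨u, v, hst, hncon, -, -, -⟩
          rw [hswap, if_neg hne21, if_pos rfl] at hst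
          injection hst with hst
          exfalso; apply hncon
          rw [h12, hG'n1]
          have hreach1' : (FGraph.sg ⟨G.verts, insert e2 G.edges⟩).Reachable a b := by
            refine hreach1.mono (SimpleGraph.fromEdgeSet_mono ?_)
            exact_mod_cast Finset.coe_subset.2 (Finset.subset_insert _ _)
          rcases Sym2.eq_iff.1 (hab.symm.trans hst) with ⟨rfl, rfl⟩ | ⟨rfl, rfl⟩
          · exact ⟨ha, hb, hreach1'⟩
          · exact ⟨hb, ha, hreach1'.symm⟩
      · have hjn1 : (j : ℕ) ≠ (i1 : ℕ) + 1 := by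
          intro h
          apply hj2
          exact Fin.ext (by omega)
        have hg : F'.graphAt (j : ℕ) = F.graphAt (j : ℕ) := (hGr _).2 hjn1
        have hs : F'.steps j = F.steps j := steps_eq_swap F F' i1 i2 e1 e2 hswap j hj1 hj2
        unfold Filtration.PairedAt Filtration.OldestIn
        rw [hg, hs, hv]
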